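/- arXiv:1004.0415 — 7 statements merged into one kernel-verified Lean document; each statement's English description precedes it below -/
import Mathlib

section
/- Let μ be a directed distance on a nonempty finite set S. (1) A point p ∈ P_μ belongs to T_μ if and only if there is no s ∈ S with p^c(s) > 0 and p^c(s) + p^r(t) > μ(s,t) for every t ∈ S, and no s ∈ S with p^r(s) > 0 and p^c(t) + p^r(s) > μ(t,s) for every t ∈ S. (2) A point p ∈ Π_μ belongs to Q_μ if and only if for every s ∈ S there exists t ∈ S with p^c(s) + p^r(t) = μ(s,t) and there exists u ∈ S with p^c(u) + p^r(s) = μ(u,s). -/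
open scoped BigOperators

/-- Points of `ℝ^{S^{cr}}`: pairs `p = (p^c, p^r)` of functions `S → ℝ`,
with the componentwise partial order (the product/pi order). -/
abbrev Pt (S : Type*) := (S → ℝ) × (S → ℝ)

/-- `μ` is a directed distance: nonnegative with zero diagonal. -/
def DirDist {S : Type*} (μ : S → S → ℝ) : Prop :=
  (∀ s t, 0 ≤ μ s t) ∧ (∀ s, μ s s = 0)

/-- `d` is a directed metric: a directed distance satisfying the triangle inequality. -/
def DirMetric {V : Type*} (d : V → V → ℝ) : Prop :=
  DirDist d ∧ ∀ x y z, d x z ≤ d x y + d y z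

/-- The polyhedron `Π_μ`. -/
def PiP {S : Type*} (μ : S → S → ℝ) : Set (Pt S) :=
  {p | ∀ s t, μ s t ≤ p.1 s + p.2 t}

/-- The polyhedron `P_μ = Π_μ ∩ ℝ_+^{S^{cr}}`. -/
def PP {S : Type*} (μ : S → S → ℝ) : Set (Pt S) :=
  {p ∈ PiP μ | 0 ≤ p}

/-- The directed tight span `T_μ`: minimal elements of `P_μ`. -/
def TT {S : Type*} (μ : S → S → ℝ) : Set (Pt S) :=
  {p ∈ PP μ | ∀ q ∈ PP μ, q ≤ p → q = p}

/-- `Q_μ`: minimal elements of `Π_μ`. -/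
def QQ {S : Type*} (μ : S → S → ℝ) : Set (Pt S) :=
  {p ∈ PiP μ | ∀ q ∈ PiP μ, q ≤ p → q = p}

/-- `Q_μ^+ = Q_μ ∩ ℝ_+^{S^{cr}}`. -/
def QP {S : Type*} (μ : S → S → ℝ) : Set (Pt S) :=
  QQ μ ∩ {p | 0 ≤ p}

/-- `D_∞^+(f,g) = max_x (g(x) - f(x))_+`. -/
noncomputable def Dplus {X : Type*} [Fintype X] (f g : X → ℝ) : ℝ :=
  ⨆ x, max (g x - f x) 0

/-- `D_∞(p,q) = max ( D_∞^+(p^c,q^c), D_∞^+(q^r,p^r) )`. -/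
noncomputable def Dinf {S : Type*} [Fintype S] (p q : Pt S) : ℝ :=
  max (Dplus p.1 q.1) (Dplus q.2 p.2)

/-- A subset `R` is balanced if no pair `p, q ∈ R` satisfies `p^c < q^c`,
and no pair satisfies `p^r < q^r`. -/
def BalancedSet {S : Type*} (R : Set (Pt S)) : Prop :=
  (¬ ∃ p ∈ R, ∃ q ∈ R, ∀ s, p.1 s < q.1 s) ∧
  (¬ ∃ p ∈ R, ∃ q ∈ R, ∀ s, p.2 s < q.2 s)

/-- The vector `e = (1, -1)` spanning the linearity space of `Π_μ`. -/
def eVec (S : Type*) : Pt S := (fun _ => 1, fun _ => -1)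

/-- `R ⊆ Q_μ` is a section: every point of `Q_μ` differs from exactly one point
of `R` by a multiple of `e`. -/
def IsSection {S : Type*} (μ : S → S → ℝ) (R : Set (Pt S)) : Prop :=
  R ⊆ QQ μ ∧ ∀ q ∈ QQ μ, ∃! p, p ∈ R ∧ ∃ α : ℝ, q - p = α • eVec S

/-- The length of the cycle `(x 0, x 1, …, x m)` with respect to `d`. -/
def cycLen {V : Type*} (d : V → V → ℝ) (m : ℕ) (x : Fin (m + 1) → V) : ℝ :=
  ∑ i, d (x i) (x (i + 1))

/-! Minimality in `Π_μ` and `P_μ` splits into minimality of the column part and of the row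
part. A column coordinate `p^c(s)` can be lowered inside `Π_μ` exactly when every constraint
through `s` is slack, and inside `P_μ` when moreover `p^c(s) > 0`; transposing `p ↦ (p^r, p^c)`,
`μ ↦ flip μ` turns rows into columns. -/

open Function Filter Topology

section Minimality

variable {α β : Type*} [Preorder α] [Preorder β]

def FstMinimal (A : Set (α × β)) (p : α × β) : Prop :=
  ∀ q ∈ A, q ≤ p → q.1 = p.1

def SndMinimal (A : Set (α × β)) (p : α × β) : Prop :=
  ∀ q ∈ A, q ≤ p → q.2 = p.2

lemma forall_le_eq_iff_fstMinimal_and_sndMinimal {A : Set (α × β)} {p : α × β} :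
    (∀ q ∈ A, q ≤ p → q = p) ↔ FstMinimal A p ∧ SndMinimal A p :=
  ⟨fun h => ⟨fun q hq hle => congrArg Prod.fst (h q hq hle),
      fun q hq hle => congrArg Prod.snd (h q hq hle)⟩,
    fun h q hq hle => Prod.ext (h.1 q hq hle) (h.2 q hq hle)⟩

lemma sndMinimal_iff_fstMinimal_swap {A : Set (α × β)} {p : α × β} :
    SndMinimal A p ↔ FstMinimal (Prod.swap ⁻¹' A) p.swap := by
  refine ⟨fun h q hq hle => ?_, fun h q hq hle => ?_⟩
  · simpa using h q.swap hq (by simpa using Prod.swap_le_swap.mpr hle)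
  · exact h q.swap (by simpa using hq) (Prod.swap_le_swap.mpr hle)

end Minimality

lemma exists_pos_forall_add_le {S : Type*} [Finite S] {f g : S → ℝ} (h : ∀ t, f t < g t)
    {c : ℝ} (hc : 0 < c) : ∃ ε, 0 < ε ∧ ε ≤ c ∧ ∀ t, f t + ε ≤ g t := by
  have hsmall : ∀ᶠ ε in 𝓝 (0 : ℝ), ε < c ∧ ∀ t, ε < g t - f t :=
    Eventually.and (Iio_mem_nhds hc) <|
      eventually_all.mpr fun t => Iio_mem_nhds (sub_pos.mpr (h t))
  obtain ⟨ε, hεpos, hεc, hεt⟩ :=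
    ((eventually_mem_nhdsWithin (a := (0 : ℝ)) (s := Set.Ioi 0)).and
      (nhdsWithin_le_nhds hsmall)).exists
  exact ⟨ε, hεpos, hεc.le, fun t => by linarith [hεt t]⟩

section Lowering

variable {S : Type*} [DecidableEq S] {μ : S → S → ℝ} {p : Pt S} {s : S} {ε : ℝ}

def lowerFst (p : Pt S) (s : S) (ε : ℝ) : Pt S :=
  (update p.1 s (p.1 s - ε), p.2)

lemma lowerFst_le (hε : 0 ≤ ε) : lowerFst p s ε ≤ p := by
  refine ⟨fun u => ?_, le_rfl⟩
  rcases eq_or_ne u s with rfl | hu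
  · simp [lowerFst, hε]
  · simp [lowerFst, hu]

lemma lowerFst_fst_ne (hε : 0 < ε) : (lowerFst p s ε).1 ≠ p.1 := fun h => by
  have := congrFun h s
  simp only [lowerFst, update_self] at this
  linarith

lemma lowerFst_nonneg (hp : 0 ≤ p) (hε : ε ≤ p.1 s) : 0 ≤ lowerFst p s ε := by
  refine ⟨fun u => ?_, hp.2⟩
  rcases eq_or_ne u s with rfl | hu
  · simpa [lowerFst] using hε
  · simpa [lowerFst, hu] using hp.1 u

lemma lowerFst_mem_PiP (hp : p ∈ PiP μ) (h : ∀ t, μ s t + ε ≤ p.1 s + p.2 t) :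
    lowerFst p s ε ∈ PiP μ := by
  intro u t
  rcases eq_or_ne u s with rfl | hu
  · simp only [lowerFst, update_self]
    linarith [h t]
  · simpa [lowerFst, hu] using hp u t

end Lowering

section Transpose

variable {S : Type*} {μ : S → S → ℝ}

lemma PiP_flip : PiP (flip μ) = Prod.swap ⁻¹' PiP μ := by
  ext q
  simp only [PiP, Set.mem_ofPred_eq, Set.mem_preimage, Prod.fst_swap, Prod.snd_swap, flip]
  exact ⟨fun h s t => by simpa [add_comm] using h t s,
    fun h s t => by simpa [add_comm] using h t s⟩

lemma PP_flip : PP (flip μ) = Prod.swap ⁻¹' PP μ := by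
  ext q
  simp only [PP, Set.mem_ofPred_eq, Set.mem_preimage, PiP_flip]
  exact and_congr_right' Prod.swap_le_swap.symm

end Transpose

section Criteria

variable {S : Type*} [Finite S] {μ : S → S → ℝ} {p : Pt S}

lemma exists_lowerFst_mem_PiP [DecidableEq S] (hp : p ∈ PiP μ) {s : S}
    (hs : ∀ t, μ s t < p.1 s + p.2 t) {c : ℝ} (hc : 0 < c) :
    ∃ ε, 0 < ε ∧ ε ≤ c ∧ lowerFst p s ε ∈ PiP μ := by
  obtain ⟨ε, hεpos, hεc, hε⟩ := exists_pos_forall_add_le hs hc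
  exact ⟨ε, hεpos, hεc, lowerFst_mem_PiP hp hε⟩

lemma fstMinimal_PP_iff (hp : p ∈ PP μ) :
    FstMinimal (PP μ) p ↔ ¬ ∃ s, 0 < p.1 s ∧ ∀ t, μ s t < p.1 s + p.2 t := by
  classical
  constructor
  · rintro hmin ⟨s, hpos, hslack⟩
    obtain ⟨ε, hεpos, hεle, hmem⟩ := exists_lowerFst_mem_PiP hp.1 hslack hpos
    exact lowerFst_fst_ne hεpos <|
      hmin _ ⟨hmem, lowerFst_nonneg hp.2 hεle⟩ (lowerFst_le hεpos.le)
  · intro hno q hq hle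
    funext u
    by_contra hne
    have hlt : q.1 u < p.1 u := lt_of_le_of_ne (hle.1 u) hne
    exact hno ⟨u, (hq.2.1 u).trans_lt hlt,
      fun t => (hq.1 u t).trans_lt (add_lt_add_of_lt_of_le hlt (hle.2 t))⟩

lemma fstMinimal_PiP_iff (hp : p ∈ PiP μ) :
    FstMinimal (PiP μ) p ↔ ∀ s, ∃ t, p.1 s + p.2 t = μ s t := by
  classical
  constructor
  · intro hmin s
    by_contra! hno
    have hslack : ∀ t, μ s t < p.1 s + p.2 t := fun t => (hp s t).lt_of_ne (hno t).symm
    obtain ⟨ε, hεpos, -, hmem⟩ := exists_lowerFst_mem_PiP hp hslack one_pos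
    exact lowerFst_fst_ne hεpos (hmin _ hmem (lowerFst_le hεpos.le))
  · intro htight q hq hle
    funext s
    obtain ⟨t, ht⟩ := htight s
    linarith [hle.1 s, hle.2 t, hq s t]

lemma sndMinimal_PP_iff (hp : p ∈ PP μ) :
    SndMinimal (PP μ) p ↔ ¬ ∃ s, 0 < p.2 s ∧ ∀ t, μ t s < p.1 t + p.2 s := by
  have hswap : p.swap ∈ PP (flip μ) := by rwa [PP_flip, Set.mem_preimage, Prod.swap_swap]
  rw [sndMinimal_iff_fstMinimal_swap, ← PP_flip, fstMinimal_PP_iff hswap]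
  simp [flip, add_comm]

lemma sndMinimal_PiP_iff (hp : p ∈ PiP μ) :
    SndMinimal (PiP μ) p ↔ ∀ s, ∃ u, p.1 u + p.2 s = μ u s := by
  have hswap : p.swap ∈ PiP (flip μ) := by rwa [PiP_flip, Set.mem_preimage, Prod.swap_swap]
  rw [sndMinimal_iff_fstMinimal_swap, ← PiP_flip, fstMinimal_PiP_iff hswap]
  simp [flip, add_comm]

end Criteria

theorem stmt0_general {S : Type*} [Fintype S] (μ : S → S → ℝ) :
    (∀ p ∈ PP μ, (p ∈ TT μ ↔
      (¬ ∃ s, 0 < p.1 s ∧ ∀ t, μ s t < p.1 s + p.2 t) ∧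
      (¬ ∃ s, 0 < p.2 s ∧ ∀ t, μ t s < p.1 t + p.2 s))) ∧
    (∀ p ∈ PiP μ, (p ∈ QQ μ ↔
      ∀ s, (∃ t, p.1 s + p.2 t = μ s t) ∧ (∃ u, p.1 u + p.2 s = μ u s))) := by
  refine ⟨fun p hp => ?_, fun p hp => ?_⟩
  · simp only [TT, Set.mem_ofPred_eq, hp, true_and, forall_le_eq_iff_fstMinimal_and_sndMinimal,
      fstMinimal_PP_iff hp, sndMinimal_PP_iff hp]
  · simp only [QQ, Set.mem_ofPred_eq, hp, true_and, forall_le_eq_iff_fstMinimal_and_sndMinimal,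
      fstMinimal_PiP_iff hp, sndMinimal_PiP_iff hp, forall_and]

/-- Lemma 2.1 (minimality criteria).  (1) A point `p ∈ P_μ` belongs to `T_μ` iff
there is no `s` with `p^c(s) > 0` and `p^c(s) + p^r(t) > μ(s,t)` for all `t`, and
no `s` with `p^r(s) > 0` and `p^c(t) + p^r(s) > μ(t,s)` for all `t`.
(2) A point `p ∈ Π_μ` belongs to `Q_μ` iff every `s` admits `t` with
`p^c(s) + p^r(t) = μ(s,t)` and `u` with `p^c(u) + p^r(s) = μ(u,s)`. -/
theorem stmt0 {S : Type*} [Fintype S] [Nonempty S] (μ : S → S → ℝ)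
    (hμ : DirDist μ) :
    (∀ p ∈ PP μ, (p ∈ TT μ ↔
      (¬ ∃ s, 0 < p.1 s ∧ ∀ t, μ s t < p.1 s + p.2 t) ∧
      (¬ ∃ s, 0 < p.2 s ∧ ∀ t, μ t s < p.1 t + p.2 s))) ∧
    (∀ p ∈ PiP μ, (p ∈ QQ μ ↔
      ∀ s, (∃ t, p.1 s + p.2 t = μ s t) ∧ (∃ u, p.1 u + p.2 s = μ u s))) :=
  stmt0_general μ
end

section
/- Let μ be a directed distance on a nonempty finite set S. (1) If p and q both belong to T_μ, or both belong to Q_μ, then D_∞(p,q) = D_∞^+(p^c,q^c) = D_∞^+(q^r,p^r). (2) For p,q ∈ Q_μ, one has p^c(s) < q^c(s) for every s ∈ S if and only if p^r(s) > q^r(s) for every s ∈ S. -/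
open scoped BigOperators

section Aux

variable {S : Type*} [Fintype S] [Nonempty S] [DecidableEq S]

lemma Dplus_nonneg (f g : S → ℝ) : 0 ≤ Dplus f g := by
  have h := le_ciSup (f := fun x => max (g x - f x) 0)
    (Set.Finite.bddAbove (Set.finite_range _)) (Classical.arbitrary S)
  exact le_trans (le_max_right _ _) h

lemma le_Dplus (f g : S → ℝ) (x : S) : max (g x - f x) 0 ≤ Dplus f g :=
  le_ciSup (f := fun x => max (g x - f x) 0)
    (Set.Finite.bddAbove (Set.finite_range _)) x

lemma Dplus_eq_of_tight (p q : Pt S)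
    (hA : ∀ s, 0 < q.1 s - p.1 s → ∃ t, q.1 s - p.1 s ≤ p.2 t - q.2 t)
    (hB : ∀ t, 0 < p.2 t - q.2 t → ∃ s, p.2 t - q.2 t ≤ q.1 s - p.1 s) :
    Dplus p.1 q.1 = Dplus q.2 p.2 := by
  apply le_antisymm
  · apply ciSup_le; intro s
    rcases le_or_gt (q.1 s - p.1 s) 0 with h | h
    · simpa [max_eq_right h] using Dplus_nonneg q.2 p.2
    · obtain ⟨t, ht⟩ := hA s h
      calc max (q.1 s - p.1 s) 0 = q.1 s - p.1 s := max_eq_left h.le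
        _ ≤ p.2 t - q.2 t := ht
        _ ≤ max (p.2 t - q.2 t) 0 := le_max_left _ _
        _ ≤ Dplus q.2 p.2 := le_Dplus _ _ t
  · apply ciSup_le; intro t
    rcases le_or_gt (p.2 t - q.2 t) 0 with h | h
    · simpa [max_eq_right h] using Dplus_nonneg p.1 q.1
    · obtain ⟨s, hs⟩ := hB t h
      calc max (p.2 t - q.2 t) 0 = p.2 t - q.2 t := max_eq_left h.le
        _ ≤ q.1 s - p.1 s := hs
        _ ≤ max (q.1 s - p.1 s) 0 := le_max_left _ _
        _ ≤ Dplus p.1 q.1 := le_Dplus _ _ s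

/-- If no constraint involving `p^c(s)` is tight, `p^c(s)` can be decreased by
a small `δ ≤ c` while staying in `Π_μ`. -/
lemma exists_tight_c {μ : S → S → ℝ} {p : Pt S} (hp : p ∈ PiP μ) (s : S) (c : ℝ)
    (hc : 0 < c) (h : ∀ t, p.1 s + p.2 t ≠ μ s t) :
    ∃ δ : ℝ, 0 < δ ∧ δ ≤ c ∧ (Function.update p.1 s (p.1 s - δ), p.2) ∈ PiP μ := by
  have hlt : ∀ t, μ s t < p.1 s + p.2 t :=
    fun t => lt_of_le_of_ne (hp s t) (fun e => h t e.symm)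
  set ε := Finset.univ.inf' Finset.univ_nonempty (fun t => p.1 s + p.2 t - μ s t) with hε
  have hεpos : 0 < ε := by
    rw [hε, Finset.lt_inf'_iff]
    intro t _
    linarith [hlt t]
  refine ⟨min ε c, lt_min hεpos hc, min_le_right _ _, ?_⟩
  intro s' t
  by_cases hss : s' = s
  · subst hss
    have h1 : ε ≤ p.1 s' + p.2 t - μ s' t := Finset.inf'_le _ (Finset.mem_univ t)
    have h2 : min ε c ≤ ε := min_le_left _ _
    simp only [Function.update_self]
    linarith
  · simp only [Function.update_of_ne hss]
    exact hp s' t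

/-- Same for `p^r(t)`. -/
lemma exists_tight_r {μ : S → S → ℝ} {p : Pt S} (hp : p ∈ PiP μ) (t : S) (c : ℝ)
    (hc : 0 < c) (h : ∀ s, p.1 s + p.2 t ≠ μ s t) :
    ∃ δ : ℝ, 0 < δ ∧ δ ≤ c ∧ (p.1, Function.update p.2 t (p.2 t - δ)) ∈ PiP μ := by
  have hlt : ∀ s, μ s t < p.1 s + p.2 t :=
    fun s => lt_of_le_of_ne (hp s t) (fun e => h s e.symm)
  set ε := Finset.univ.inf' Finset.univ_nonempty (fun s => p.1 s + p.2 t - μ s t) with hε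
  have hεpos : 0 < ε := by
    rw [hε, Finset.lt_inf'_iff]
    intro s _
    linarith [hlt s]
  refine ⟨min ε c, lt_min hεpos hc, min_le_right _ _, ?_⟩
  intro s t'
  by_cases htt : t' = t
  · subst htt
    have h1 : ε ≤ p.1 s + p.2 t' - μ s t' := Finset.inf'_le _ (Finset.mem_univ s)
    have h2 : min ε c ≤ ε := min_le_left _ _
    simp only [Function.update_self]
    linarith
  · simp only [Function.update_of_ne htt]
    exact hp s t'

lemma Q_tight_c {μ : S → S → ℝ} {p : Pt S} (hp : p ∈ QQ μ) (s : S) :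
    ∃ t, p.1 s + p.2 t = μ s t := by
  by_contra h
  push_neg at h
  obtain ⟨δ, hδpos, _, hq⟩ := exists_tight_c hp.1 s 1 one_pos h
  have hle : (Function.update p.1 s (p.1 s - δ), p.2) ≤ p := by
    refine ⟨?_, le_refl _⟩
    intro u
    by_cases hu : u = s
    · subst hu; simp only [Function.update_self]; linarith
    · simp [Function.update_of_ne hu]
  have heq := hp.2 _ hq hle
  have := congrFun (congrArg Prod.fst heq) s
  simp only [Function.update_self] at this
  linarith

lemma Q_tight_r {μ : S → S → ℝ} {p : Pt S} (hp : p ∈ QQ μ) (t : S) :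
    ∃ s, p.1 s + p.2 t = μ s t := by
  by_contra h
  push_neg at h
  obtain ⟨δ, hδpos, _, hq⟩ := exists_tight_r hp.1 t 1 one_pos h
  have hle : (p.1, Function.update p.2 t (p.2 t - δ)) ≤ p := by
    refine ⟨le_refl _, ?_⟩
    intro u
    by_cases hu : u = t
    · subst hu; simp only [Function.update_self]; linarith
    · simp [Function.update_of_ne hu]
  have heq := hp.2 _ hq hle
  have := congrFun (congrArg Prod.snd heq) t
  simp only [Function.update_self] at this
  linarith

lemma T_tight_c {μ : S → S → ℝ} {p : Pt S} (hp : p ∈ TT μ) (s : S)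
    (hs : 0 < p.1 s) : ∃ t, p.1 s + p.2 t = μ s t := by
  by_contra h
  push_neg at h
  obtain ⟨δ, hδpos, hδle, hq⟩ := exists_tight_c hp.1.1 s (p.1 s) hs h
  have hle : (Function.update p.1 s (p.1 s - δ), p.2) ≤ p := by
    refine ⟨?_, le_refl _⟩
    intro u
    by_cases hu : u = s
    · subst hu; simp only [Function.update_self]; linarith
    · simp [Function.update_of_ne hu]
  have hnn : (0 : Pt S) ≤ (Function.update p.1 s (p.1 s - δ), p.2) := by
    refine ⟨?_, hp.1.2.2⟩
    intro u
    by_cases hu : u = s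
    · subst hu; simp only [Function.update_self]; show (0:ℝ) ≤ _; linarith
    · simp only [Function.update_of_ne hu]; exact hp.1.2.1 u
  have heq := hp.2 _ ⟨hq, hnn⟩ hle
  have := congrFun (congrArg Prod.fst heq) s
  simp only [Function.update_self] at this
  linarith

lemma T_tight_r {μ : S → S → ℝ} {p : Pt S} (hp : p ∈ TT μ) (t : S)
    (ht : 0 < p.2 t) : ∃ s, p.1 s + p.2 t = μ s t := by
  by_contra h
  push_neg at h
  obtain ⟨δ, hδpos, hδle, hq⟩ := exists_tight_r hp.1.1 t (p.2 t) ht h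
  have hle : (p.1, Function.update p.2 t (p.2 t - δ)) ≤ p := by
    refine ⟨le_refl _, ?_⟩
    intro u
    by_cases hu : u = t
    · subst hu; simp only [Function.update_self]; linarith
    · simp [Function.update_of_ne hu]
  have hnn : (0 : Pt S) ≤ (p.1, Function.update p.2 t (p.2 t - δ)) := by
    refine ⟨hp.1.2.1, ?_⟩
    intro u
    by_cases hu : u = t
    · subst hu; simp only [Function.update_self]; show (0:ℝ) ≤ _; linarith
    · simp only [Function.update_of_ne hu]; exact hp.1.2.2 u
  have heq := hp.2 _ ⟨hq, hnn⟩ hle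
  have := congrFun (congrArg Prod.snd heq) t
  simp only [Function.update_self] at this
  linarith

end Aux

/-- Lemma 2.2.  (1) `D_∞(p,q) = D_∞^+(p^c,q^c) = D_∞^+(q^r,p^r)` for `p,q ∈ T_μ`
and for `p,q ∈ Q_μ`.  (2) For `p,q ∈ Q_μ`, `p^c < q^c` iff `p^r > q^r`. -/
theorem stmt1 {S : Type*} [Fintype S] [Nonempty S] (μ : S → S → ℝ)
    (hμ : DirDist μ) :
    (∀ p ∈ TT μ, ∀ q ∈ TT μ,
      Dinf p q = Dplus p.1 q.1 ∧ Dinf p q = Dplus q.2 p.2) ∧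
    (∀ p ∈ QQ μ, ∀ q ∈ QQ μ,
      Dinf p q = Dplus p.1 q.1 ∧ Dinf p q = Dplus q.2 p.2) ∧
    (∀ p ∈ QQ μ, ∀ q ∈ QQ μ,
      ((∀ s, p.1 s < q.1 s) ↔ (∀ s, q.2 s < p.2 s))) := by
  classical
  refine ⟨?_, ?_, ?_⟩
  · intro p hp q hq
    have hAB : Dplus p.1 q.1 = Dplus q.2 p.2 := by
      apply Dplus_eq_of_tight
      · intro s hs
        have hq1 : 0 < q.1 s := lt_of_le_of_lt (hp.1.2.1 s) (by linarith)
        obtain ⟨t, ht⟩ := T_tight_c hq s hq1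
        exact ⟨t, by have := hp.1.1 s t; linarith⟩
      · intro t ht
        have hp2 : 0 < p.2 t := lt_of_le_of_lt (hq.1.2.2 t) (by linarith)
        obtain ⟨s, hs⟩ := T_tight_r hp t hp2
        exact ⟨s, by have := hq.1.1 s t; linarith⟩
    constructor
    · rw [Dinf, hAB, max_self]
    · rw [Dinf, hAB, max_self]
  · intro p hp q hq
    have hAB : Dplus p.1 q.1 = Dplus q.2 p.2 := by
      apply Dplus_eq_of_tight
      · intro s hs
        obtain ⟨t, ht⟩ := Q_tight_c hq s
        exact ⟨t, by have := hp.1 s t; linarith⟩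
      · intro t ht
        obtain ⟨s, hs⟩ := Q_tight_r hp t
        exact ⟨s, by have := hq.1 s t; linarith⟩
    constructor
    · rw [Dinf, hAB, max_self]
    · rw [Dinf, hAB, max_self]
  · intro p hp q hq
    constructor
    · intro hc t
      obtain ⟨s, hs⟩ := Q_tight_r hq t
      have := hp.1 s t
      have := hc s
      linarith
    · intro hr s
      obtain ⟨t, ht⟩ := Q_tight_c hp s
      have := hq.1 s t
      have := hr t
      linarith
end

section
/- Let μ be a directed distance on a nonempty finite set S. For every balanced subset B ⊆ Q_μ there exists a balanced section R ⊆ Q_μ with B ⊆ R. Moreover, if B ⊆ Q_μ^+, then there exists a balanced section R of Q_μ with B ⊆ R ⊆ Q_μ^+. -/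
open scoped BigOperators

section Helpers
variable {S : Type*} [Fintype S] [Nonempty S] {μ : S → S → ℝ}

lemma le_iff_pt {p q : Pt S} : p ≤ q ↔ (∀ s, p.1 s ≤ q.1 s) ∧ (∀ s, p.2 s ≤ q.2 s) := by
  rw [Prod.le_def, Pi.le_def, Pi.le_def]

lemma nonneg_iff {p : Pt S} : (0 : Pt S) ≤ p ↔ (∀ s, 0 ≤ p.1 s) ∧ (∀ s, 0 ≤ p.2 s) := by
  rw [le_iff_pt]; simp

lemma shift_fst (q : Pt S) (α : ℝ) (s : S) : (q + α • eVec S).1 s = q.1 s + α := by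
  simp [eVec]

lemma shift_snd (q : Pt S) (α : ℝ) (t : S) : (q + α • eVec S).2 t = q.2 t - α := by
  simp [eVec]; ring

lemma shift_mem_PiP {q : Pt S} (hq : q ∈ PiP μ) (α : ℝ) : q + α • eVec S ∈ PiP μ := by
  intro s t
  rw [shift_fst, shift_snd]
  have := hq s t; linarith

lemma shift_mem_QQ {q : Pt S} (hq : q ∈ QQ μ) (α : ℝ) : q + α • eVec S ∈ QQ μ := by
  refine ⟨shift_mem_PiP hq.1 α, fun p hp hle => ?_⟩
  have h1 : p + (-α) • eVec S ∈ PiP μ := shift_mem_PiP hp _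
  have h2 : p + (-α) • eVec S ≤ q := by
    rw [le_iff_pt] at hle ⊢
    constructor
    · intro s; rw [shift_fst]
      have := hle.1 s; rw [shift_fst] at this; linarith
    · intro t; rw [shift_snd]
      have := hle.2 t; rw [shift_snd] at this; linarith
  have h3 := hq.2 _ h1 h2
  have : p = (p + (-α) • eVec S) + α • eVec S := by module
  rw [this, h3]

lemma tight_c {q : Pt S} (hq : q ∈ QQ μ) (s : S) : ∃ t, q.1 s + q.2 t = μ s t := by
  classical
  by_contra h
  push_neg at h
  have hlt : ∀ t, μ s t < q.1 s + q.2 t := fun t =>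
    lt_of_le_of_ne (hq.1 s t) (fun he => h t he.symm)
  set ε := Finset.univ.inf' Finset.univ_nonempty (fun t => q.1 s + q.2 t - μ s t) with hε
  have hεpos : 0 < ε := by
    rw [hε, Finset.lt_inf'_iff]
    intro t _
    have := hlt t; linarith
  have hεle : ∀ t, ε ≤ q.1 s + q.2 t - μ s t := fun t => Finset.inf'_le _ (Finset.mem_univ t)
  have hq'P : ((Function.update q.1 s (q.1 s - ε), q.2) : Pt S) ∈ PiP μ := by
    intro s' t
    by_cases hs : s' = s
    · subst hs
      simp only [Function.update_self]
      have := hεle t; linarith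
    · simp only [Function.update_of_ne hs]
      exact hq.1 s' t
  have hle : ((Function.update q.1 s (q.1 s - ε), q.2) : Pt S) ≤ q := by
    rw [le_iff_pt]
    refine ⟨fun s' => ?_, fun t => le_refl _⟩
    by_cases hs : s' = s
    · subst hs; simp only [Function.update_self]; linarith
    · simp only [Function.update_of_ne hs]; exact le_refl _
  have heq := hq.2 _ hq'P hle
  have := congrArg (fun v : Pt S => v.1 s) heq
  simp only [Function.update_self] at this
  linarith

lemma tight_r {q : Pt S} (hq : q ∈ QQ μ) (t : S) : ∃ s, q.1 s + q.2 t = μ s t := by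
  classical
  by_contra h
  push_neg at h
  have hlt : ∀ s, μ s t < q.1 s + q.2 t := fun s =>
    lt_of_le_of_ne (hq.1 s t) (fun he => h s he.symm)
  set ε := Finset.univ.inf' Finset.univ_nonempty (fun s => q.1 s + q.2 t - μ s t) with hε
  have hεpos : 0 < ε := by
    rw [hε, Finset.lt_inf'_iff]
    intro s _
    have := hlt s; linarith
  have hεle : ∀ s, ε ≤ q.1 s + q.2 t - μ s t := fun s => Finset.inf'_le _ (Finset.mem_univ s)
  have hq'P : ((q.1, Function.update q.2 t (q.2 t - ε)) : Pt S) ∈ PiP μ := by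
    intro s t'
    by_cases ht : t' = t
    · subst ht
      simp only [Function.update_self]
      have := hεle s; linarith
    · simp only [Function.update_of_ne ht]
      exact hq.1 s t'
  have hle : ((q.1, Function.update q.2 t (q.2 t - ε)) : Pt S) ≤ q := by
    rw [le_iff_pt]
    refine ⟨fun s => le_refl _, fun t' => ?_⟩
    by_cases ht : t' = t
    · subst ht; simp only [Function.update_self]; linarith
    · simp only [Function.update_of_ne ht]; exact le_refl _
  have heq := hq.2 _ hq'P hle
  have := congrArg (fun v : Pt S => v.2 t) heq
  simp only [Function.update_self] at this
  linarith

lemma lt_flip {p q : Pt S} (hp : p ∈ PiP μ) (hq : q ∈ QQ μ)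
    (h : ∀ s, p.1 s < q.1 s) (t : S) : q.2 t < p.2 t := by
  obtain ⟨s, hs⟩ := tight_r hq t
  have h1 := hp s t
  have h2 := h s
  linarith

lemma lt_flip' {p q : Pt S} (hp : p ∈ PiP μ) (hq : q ∈ QQ μ)
    (h : ∀ t, p.2 t < q.2 t) (s : S) : q.1 s < p.1 s := by
  obtain ⟨t, ht⟩ := tight_c hq s
  have h1 := hp s t
  have h2 := h t
  linarith

end Helpers


/-- No pair `p, q` in `R` with `p.1 < q.1` pointwise (positive formulation). -/
def NoBadC {S : Type*} (R : Set (Pt S)) : Prop := ∀ p ∈ R, ∀ q ∈ R, ∃ s, q.1 s ≤ p.1 s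

section Helpers2
variable {S : Type*} [Fintype S] [Nonempty S] {μ : S → S → ℝ}

lemma balanced_of_noBadC {R : Set (Pt S)} (hR : R ⊆ QQ μ) (h : NoBadC R) : BalancedSet R := by
  constructor
  · rintro ⟨p, hp, q, hq, hlt⟩
    obtain ⟨s, hs⟩ := h p hp q hq
    exact absurd (hlt s) (not_lt.mpr hs)
  · rintro ⟨p, hp, q, hq, hlt⟩
    have h2 : ∀ s, q.1 s < p.1 s := fun s => lt_flip' (hR hp).1 (hR hq) hlt s
    obtain ⟨s, hs⟩ := h q hq p hp
    exact absurd (h2 s) (not_lt.mpr hs)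

lemma ptInf_le_sup (q : Pt S) {R : Set (Pt S)} (hRc : NoBadC R)
    {r1 r2 : Pt S} (h1 : r1 ∈ R) (h2 : r2 ∈ R) :
    Finset.univ.inf' Finset.univ_nonempty (fun s => r1.1 s - q.1 s) ≤
      Finset.univ.sup' Finset.univ_nonempty (fun s => r2.1 s - q.1 s) := by
  by_contra hlt
  push_neg at hlt
  have hbad : ∀ s, r2.1 s < r1.1 s := by
    intro s
    have ha : r2.1 s - q.1 s ≤ Finset.univ.sup' Finset.univ_nonempty (fun s => r2.1 s - q.1 s) := by
      exact Finset.le_sup' (fun s => r2.1 s - q.1 s) (Finset.mem_univ s)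
    have hb : Finset.univ.inf' Finset.univ_nonempty (fun s => r1.1 s - q.1 s) ≤ r1.1 s - q.1 s := by
      exact Finset.inf'_le (fun s => r1.1 s - q.1 s) (Finset.mem_univ s)
    linarith
  obtain ⟨s, hs⟩ := hRc r2 h2 r1 h1
  exact absurd (hbad s) (not_lt.mpr hs)

/-- Core extension-to-section lemma, parametric in the ambient set `T`. -/
lemma section_of_T (T : Set (Pt S)) (hTQ : T ⊆ QQ μ) (B : Set (Pt S))
    (hBT : B ⊆ T) (hBc : NoBadC B)
    (hext : ∀ R : Set (Pt S), R ⊆ T → NoBadC R → ∀ q ∈ QQ μ, ∃ α : ℝ,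
      q + α • eVec S ∈ T ∧ ∀ r ∈ R, (∃ s, q.1 s + α ≤ r.1 s) ∧ (∃ s, r.1 s ≤ q.1 s + α)) :
    ∃ R, IsSection μ R ∧ BalancedSet R ∧ B ⊆ R ∧ R ⊆ T := by
  obtain ⟨R, hBR, hRmax⟩ := zorn_subset_nonempty {R : Set (Pt S) | B ⊆ R ∧ R ⊆ T ∧ NoBadC R}
    (fun c hc hchain hne => by
      refine ⟨⋃₀ c, ⟨?_, ?_, ?_⟩, fun s hs => Set.subset_sUnion_of_mem hs⟩
      · obtain ⟨x, hx⟩ := hne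
        exact (hc hx).1.trans (Set.subset_sUnion_of_mem hx)
      · rintro p ⟨x, hx, hpx⟩
        exact (hc hx).2.1 hpx
      · rintro p ⟨x, hx, hpx⟩ q ⟨y, hy, hqy⟩
        rcases hchain.total hx hy with hxy | hyx
        · exact (hc hy).2.2 p (hxy hpx) q hqy
        · exact (hc hx).2.2 p hpx q (hyx hqy))
    B ⟨Set.Subset.rfl, hBT, hBc⟩
  obtain ⟨hBR', hRT, hRc⟩ := hRmax.1
  have hRQ : R ⊆ QQ μ := hRT.trans hTQ
  refine ⟨R, ⟨hRQ, ?_⟩, balanced_of_noBadC hRQ hRc, hBR, hRT⟩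
  intro q hq
  obtain ⟨α, hmem, hcond⟩ := hext R hRT hRc q hq
  have hpR : q + α • eVec S ∈ R := by
    have h𝒞 : insert (q + α • eVec S) R ∈ {R : Set (Pt S) | B ⊆ R ∧ R ⊆ T ∧ NoBadC R} := by
      refine ⟨hBR'.trans (Set.subset_insert _ _), ?_, ?_⟩
      · rintro x (rfl | hx)
        · exact hmem
        · exact hRT hx
      · rintro x (rfl | hx) y (rfl | hy)
        · exact ⟨Classical.arbitrary S, le_refl _⟩
        · obtain ⟨s, hs⟩ := (hcond y hy).2
          exact ⟨s, by rw [shift_fst]; exact hs⟩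
        · obtain ⟨s, hs⟩ := (hcond x hx).1
          exact ⟨s, by rw [shift_fst]; exact hs⟩
        · exact hRc x hx y hy
    exact hRmax.2 h𝒞 (Set.subset_insert _ _) (Set.mem_insert _ _)
  refine ⟨q + α • eVec S, ⟨hpR, ⟨-α, by module⟩⟩, ?_⟩
  rintro p' ⟨hp'R, β, hβ⟩
  have e1 : ∀ s, p'.1 s = q.1 s - β := by
    intro s
    have := congrArg (fun v : Pt S => v.1 s) hβ
    simp only [eVec, Prod.fst_sub, Pi.sub_apply, Prod.smul_fst, Pi.smul_apply,
      smul_eq_mul, mul_one] at this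
    linarith
  obtain ⟨s1, hs1⟩ := hRc (q + α • eVec S) hpR p' hp'R
  obtain ⟨s2, hs2⟩ := hRc p' hp'R (q + α • eVec S) hpR
  rw [e1 s1, shift_fst] at hs1
  rw [e1 s2, shift_fst] at hs2
  have hβα : β = -α := by linarith
  have hp'eq : p' = q - β • eVec S := by
    have : q - p' = β • eVec S := hβ
    have h2 : p' = q - (q - p') := by module
    rw [h2, this]
  rw [hp'eq, hβα]
  module

end Helpers2

section Ext
variable {S : Type*} [Fintype S] [Nonempty S] {μ : S → S → ℝ}

lemma hext_QQ : ∀ R : Set (Pt S), R ⊆ QQ μ → NoBadC R → ∀ q ∈ QQ μ, ∃ α : ℝ,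
    q + α • eVec S ∈ QQ μ ∧ ∀ r ∈ R, (∃ s, q.1 s + α ≤ r.1 s) ∧ (∃ s, r.1 s ≤ q.1 s + α) := by
  intro R hRT hRc q hq
  rcases R.eq_empty_or_nonempty with rfl | hR
  · exact ⟨0, shift_mem_QQ hq 0, fun r hr => absurd hr (Set.notMem_empty r)⟩
  obtain ⟨r0, hr0⟩ := hR
  set M : Set ℝ := (fun r => Finset.univ.inf' Finset.univ_nonempty (fun s => r.1 s - q.1 s)) '' R
    with hM
  have hMne : M.Nonempty := ⟨_, ⟨r0, hr0, rfl⟩⟩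
  have hMbdd : BddAbove M := by
    refine ⟨Finset.univ.sup' Finset.univ_nonempty (fun s => r0.1 s - q.1 s), ?_⟩
    rintro x ⟨r, hr, rfl⟩
    exact ptInf_le_sup q hRc hr hr0
  refine ⟨sSup M, shift_mem_QQ hq _, fun r hr => ⟨?_, ?_⟩⟩
  · have hle : sSup M ≤ Finset.univ.sup' Finset.univ_nonempty (fun s => r.1 s - q.1 s) :=
      csSup_le hMne (by rintro x ⟨r', hr', rfl⟩; exact ptInf_le_sup q hRc hr' hr)
    obtain ⟨s, _, hs⟩ := Finset.exists_mem_eq_sup' Finset.univ_nonempty (fun s => r.1 s - q.1 s)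
    rw [hs] at hle
    exact ⟨s, by linarith⟩
  · have hge : Finset.univ.inf' Finset.univ_nonempty (fun s => r.1 s - q.1 s) ≤ sSup M :=
      le_csSup hMbdd ⟨r, hr, rfl⟩
    obtain ⟨s, _, hs⟩ := Finset.exists_mem_eq_inf' Finset.univ_nonempty (fun s => r.1 s - q.1 s)
    rw [hs] at hge
    exact ⟨s, by linarith⟩

lemma hext_QP (hμ : DirDist μ) : ∀ R : Set (Pt S), R ⊆ QP μ → NoBadC R → ∀ q ∈ QQ μ, ∃ α : ℝ,
    q + α • eVec S ∈ QP μ ∧ ∀ r ∈ R, (∃ s, q.1 s + α ≤ r.1 s) ∧ (∃ s, r.1 s ≤ q.1 s + α) := by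
  intro R hRT hRc q hq
  set A := Finset.univ.sup' Finset.univ_nonempty (fun s => -q.1 s) with hA
  have hAle : ∀ s, -q.1 s ≤ A := by
    intro s; rw [hA]; exact Finset.le_sup' (fun s => -q.1 s) (Finset.mem_univ s)
  obtain ⟨s0, _, hs0⟩ := Finset.exists_mem_eq_sup' Finset.univ_nonempty (fun s => -q.1 s)
  rw [← hA] at hs0
  have hAq2 : ∀ t, A ≤ q.2 t := by
    intro t
    have h1 : 0 ≤ μ s0 t := hμ.1 s0 t
    have h2 := hq.1 s0 t
    rw [hs0]; linarith
  have hmemA : ∀ α : ℝ, A ≤ α → (∀ t, α ≤ q.2 t) → q + α • eVec S ∈ QP μ := by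
    intro α h1 h2
    refine ⟨shift_mem_QQ hq _, ?_⟩
    rw [Set.mem_setOf_eq, nonneg_iff]
    constructor
    · intro s; rw [shift_fst]; have := hAle s; linarith
    · intro t; rw [shift_snd]; have := h2 t; linarith
  rcases R.eq_empty_or_nonempty with rfl | hR
  · exact ⟨A, hmemA A (le_refl _) hAq2, fun r hr => absurd hr (Set.notMem_empty r)⟩
  obtain ⟨r0, hr0⟩ := hR
  have hRQ : R ⊆ QQ μ := hRT.trans Set.inter_subset_left
  have hRpos : ∀ r ∈ R, (∀ s, 0 ≤ r.1 s) ∧ (∀ s, 0 ≤ r.2 s) :=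
    fun r hr => nonneg_iff.mp (hRT hr).2
  set M : Set ℝ := (fun r => Finset.univ.inf' Finset.univ_nonempty (fun s => r.1 s - q.1 s)) '' R
    with hM
  have hMne : M.Nonempty := ⟨_, ⟨r0, hr0, rfl⟩⟩
  have hMbdd : BddAbove M := by
    refine ⟨Finset.univ.sup' Finset.univ_nonempty (fun s => r0.1 s - q.1 s), ?_⟩
    rintro x ⟨r, hr, rfl⟩
    exact ptInf_le_sup q hRc hr hr0
  -- each element of M is ≤ q.2 t for every t
  have hMq2 : ∀ t, ∀ x ∈ M, x ≤ q.2 t := by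
    rintro t x ⟨r, hr, rfl⟩
    have hkey : ∃ s, r.1 s - q.1 s ≤ q.2 t := by
      by_contra hcon
      push_neg at hcon
      have hlt : ∀ s, (q + (q.2 t) • eVec S).1 s < r.1 s := by
        intro s; rw [shift_fst]; have := hcon s; linarith
      have hflip := lt_flip (shift_mem_QQ hq (q.2 t)).1 (hRQ hr) hlt t
      rw [shift_snd] at hflip
      have := (hRpos r hr).2 t
      linarith
    obtain ⟨s, hs⟩ := hkey
    calc Finset.univ.inf' Finset.univ_nonempty (fun s => r.1 s - q.1 s) ≤ r.1 s - q.1 s :=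
          Finset.inf'_le (fun s => r.1 s - q.1 s) (Finset.mem_univ s)
      _ ≤ q.2 t := hs
  refine ⟨max A (sSup M), hmemA _ (le_max_left _ _)
    (fun t => max_le (hAq2 t) (csSup_le hMne (hMq2 t))), fun r hr => ⟨?_, ?_⟩⟩
  · -- ∃ s, q.1 s + α ≤ r.1 s, i.e. α ≤ sup_s (r.1 s - q.1 s)
    have hA_le : A ≤ Finset.univ.sup' Finset.univ_nonempty (fun s => r.1 s - q.1 s) := by
      have h1 : 0 ≤ r.1 s0 := (hRpos r hr).1 s0
      have h2 : r.1 s0 - q.1 s0 ≤ Finset.univ.sup' Finset.univ_nonempty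
          (fun s => r.1 s - q.1 s) := Finset.le_sup' (fun s => r.1 s - q.1 s) (Finset.mem_univ s0)
      rw [hs0]; linarith
    have hS_le : sSup M ≤ Finset.univ.sup' Finset.univ_nonempty (fun s => r.1 s - q.1 s) :=
      csSup_le hMne (by rintro x ⟨r', hr', rfl⟩; exact ptInf_le_sup q hRc hr' hr)
    have hle := max_le hA_le hS_le
    obtain ⟨s, _, hs⟩ := Finset.exists_mem_eq_sup' Finset.univ_nonempty (fun s => r.1 s - q.1 s)
    rw [hs] at hle
    exact ⟨s, by linarith⟩
  · have hge : Finset.univ.inf' Finset.univ_nonempty (fun s => r.1 s - q.1 s) ≤ max A (sSup M) :=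
      le_trans (le_csSup hMbdd ⟨r, hr, rfl⟩) (le_max_right _ _)
    obtain ⟨s, _, hs⟩ := Finset.exists_mem_eq_inf' Finset.univ_nonempty (fun s => r.1 s - q.1 s)
    rw [hs] at hge
    exact ⟨s, by linarith⟩

end Ext

/-- Lemma 2.4.  Every balanced subset `B ⊆ Q_μ` extends to a balanced section
`R ⊆ Q_μ`; if moreover `B ⊆ Q_μ^+` then `R` can be taken inside `Q_μ^+`. -/
theorem stmt2 {S : Type*} [Fintype S] [Nonempty S] (μ : S → S → ℝ)
    (hμ : DirDist μ) (B : Set (Pt S)) (hBQ : B ⊆ QQ μ) (hB : BalancedSet B) :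
    (∃ R : Set (Pt S), IsSection μ R ∧ BalancedSet R ∧ B ⊆ R) ∧
    (B ⊆ QP μ → ∃ R : Set (Pt S), IsSection μ R ∧ BalancedSet R ∧ B ⊆ R ∧ R ⊆ QP μ) := by
  have hBc : NoBadC B := by
    have h1 := hB.1
    push_neg at h1
    intro p hp q hq
    obtain ⟨s, hs⟩ := h1 p hp q hq
    exact ⟨s, hs⟩
  constructor
  · obtain ⟨R, h1, h2, h3, _⟩ := section_of_T (QQ μ) Set.Subset.rfl B hBQ hBc hext_QQ
    exact ⟨R, h1, h2, h3⟩
  · intro hBP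
    exact section_of_T (QP μ) Set.inter_subset_left B hBP hBc (hext_QP hμ)
end

section
/- Let μ be a directed distance on a nonempty finite set S and let R ⊆ Q_μ be a balanced section, with retraction φ_R : Q_μ → R sending each q ∈ Q_μ to the unique p ∈ R with q − p ∈ ℝe. Then (1) D_∞(φ_R(C)) ≤ D_∞(C) for every cycle C in Q_μ, and (2) a subset U ⊆ Q_μ is balanced if and only if D_∞(φ_R(C)) = D_∞(C) holds for every cycle C in U. -/
open scoped BigOperators

/-!
For `p, q ∈ Q_μ` every coordinate is tight, `p^c(s) = max_t (μ(s,t) - p^r(t))` and symmetrically,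
which forces `max_s (q^c - p^c)(s) = max_t (p^r - q^r)(t)`. Hence on `Q_μ` we have
`D_∞(p,q) = max(A(p,q), 0)` with `A(p,q) = max_s (q^c(s) - p^c(s))`. Moving points along `ℝe`
changes `A` by a coboundary `α_p - α_q`, which cancels around a cycle, and `A ≥ 0` on a balanced
set, so on `R` the positive part can be dropped. Thus `D_∞(φ_R(C)) = Σ A ≤ Σ max(A, 0) = D_∞(C)`,
with equality on every cycle of `U` iff `A ≥ 0` on `U` (test 2-cycles), i.e. iff `U` is balanced.
-/

noncomputable def supGap {X : Type*} (f g : X → ℝ) : ℝ := ⨆ x, (g x - f x)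

section SupGap

variable {X : Type*} [Finite X] {f g : X → ℝ}

theorem sub_le_supGap (f g : X → ℝ) (x : X) : g x - f x ≤ supGap f g :=
  le_ciSup (f := fun x => g x - f x) (Finite.bddAbove_range _) x

theorem supGap_neg_iff [Nonempty X] : supGap f g < 0 ↔ ∀ x, g x < f x := by
  refine ⟨fun h x => by linarith [sub_le_supGap f g x], fun h => ?_⟩
  obtain ⟨x, hx⟩ := exists_eq_ciSup_of_finite (f := fun x => g x - f x)
  rw [supGap, ← hx]
  linarith [h x]

theorem supGap_sub_const [Nonempty X] (a b : ℝ) :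
    supGap (fun x => f x - a) (fun x => g x - b) = supGap f g + (a - b) := by
  rw [supGap, supGap, (monotone_id.add_const (a - b)).map_ciSup_of_continuousAt
    (continuous_add_const _).continuousAt (Finite.bddAbove_range _)]
  congr 1 with x
  ring

theorem Dplus_eq_max_supGap [Fintype X] [Nonempty X] : Dplus f g = max (supGap f g) 0 :=
  ((monotone_id.max monotone_const).map_ciSup_of_continuousAt
    (continuous_id.max continuous_const).continuousAt (Finite.bddAbove_range _)).symm

end SupGap

section MinimalPoints

variable {S : Type*} {μ : S → S → ℝ} {p q : Pt S}

theorem swap_mem_PiP_flip (hp : p ∈ PiP μ) : p.swap ∈ PiP (flip μ) :=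
  fun s t => (hp t s).trans_eq (add_comm _ _)

theorem swap_mem_QQ_flip (hp : p ∈ QQ μ) : p.swap ∈ QQ (flip μ) := by
  refine ⟨swap_mem_PiP_flip hp.1, fun q hq hqp => ?_⟩
  rw [← hp.2 q.swap (swap_mem_PiP_flip hq) (Prod.swap_le_swap.mpr hqp), Prod.swap_swap]

variable [Finite S] [Nonempty S]

theorem fst_eq_iSup_of_mem_QQ (hp : p ∈ QQ μ) (s : S) : p.1 s = ⨆ t, (μ s t - p.2 t) := by
  classical
  set m := ⨆ t, (μ s t - p.2 t)
  have hm : m ≤ p.1 s := ciSup_le fun t => by linarith [hp.1 s t]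
  have hle : ∀ t, μ s t ≤ m + p.2 t := fun t => by
    linarith [le_ciSup (f := fun t => μ s t - p.2 t) (Finite.bddAbove_range _) t]
  let q : Pt S := (Function.update p.1 s m, p.2)
  have hq : q ∈ PiP μ := by
    intro s' t
    rcases eq_or_ne s' s with rfl | hs
    · simpa [q] using hle t
    · simpa [q, hs] using hp.1 s' t
  have hqp : q ≤ p := ⟨update_le_iff.mpr ⟨hm, fun _ _ => le_rfl⟩, le_rfl⟩
  simpa [q] using (congrFun (congrArg Prod.fst (hp.2 q hq hqp)) s).symm

theorem exists_add_eq_of_mem_QQ (hp : p ∈ QQ μ) (s : S) : ∃ t, p.1 s + p.2 t = μ s t := by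
  obtain ⟨t, ht⟩ := exists_eq_ciSup_of_finite (f := fun t => μ s t - p.2 t)
  refine ⟨t, ?_⟩
  linarith [fst_eq_iSup_of_mem_QQ hp s]

theorem supGap_fst_le_supGap_snd (hp : p ∈ QQ μ) (hq : q ∈ QQ μ) :
    supGap p.1 q.1 ≤ supGap q.2 p.2 :=
  ciSup_le fun s => by
    obtain ⟨t, ht⟩ := exists_add_eq_of_mem_QQ hq s
    linarith [hp.1 s t, sub_le_supGap q.2 p.2 t]

theorem supGap_snd_eq_supGap_fst (hp : p ∈ QQ μ) (hq : q ∈ QQ μ) :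
    supGap q.2 p.2 = supGap p.1 q.1 :=
  le_antisymm (supGap_fst_le_supGap_snd (swap_mem_QQ_flip hq) (swap_mem_QQ_flip hp))
    (supGap_fst_le_supGap_snd hp hq)

theorem balancedSet_iff_supGap_nonneg {U : Set (Pt S)} (hU : U ⊆ QQ μ) :
    BalancedSet U ↔ ∀ p ∈ U, ∀ q ∈ U, 0 ≤ supGap p.1 q.1 := by
  simp only [← not_lt, supGap_neg_iff]
  refine ⟨fun hb p hp q hq hlt => hb.1 ⟨q, hq, p, hp, hlt⟩, fun h => ⟨?_, ?_⟩⟩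
  · rintro ⟨p, hp, q, hq, hlt⟩
    exact h q hq p hp hlt
  · rintro ⟨p, hp, q, hq, hlt⟩
    refine h p hp q hq ?_
    rw [← supGap_neg_iff, ← supGap_snd_eq_supGap_fst (hU hp) (hU hq), supGap_neg_iff]
    exact hlt

end MinimalPoints

section Cycles

variable {V : Type*} {m : ℕ} {x : Fin (m + 1) → V}

theorem cycLen_congr {U : Set V} {d d' : V → V → ℝ} (h : ∀ p ∈ U, ∀ q ∈ U, d p q = d' p q)
    (hx : ∀ i, x i ∈ U) : cycLen d m x = cycLen d' m x :=
  Finset.sum_congr rfl fun i _ => h _ (hx i) _ (hx (i + 1))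

theorem cycLen_add_sub (d : V → V → ℝ) (f : V → ℝ) :
    cycLen (fun p q => d p q + (f p - f q)) m x = cycLen d m x := by
  have hshift : ∑ i, f (x (i + 1)) = ∑ i, f (x i) :=
    Equiv.sum_comp (Equiv.addRight 1) (fun i => f (x i))
  simp only [cycLen, Finset.sum_add_distrib, Finset.sum_sub_distrib, hshift, sub_self, add_zero]

theorem cycLen_le_cycLen_max_zero (d : V → V → ℝ) :
    cycLen d m x ≤ cycLen (fun p q => max (d p q) 0) m x :=
  Finset.sum_le_sum fun _ _ => le_max_left _ _

theorem forall_cycLen_eq_max_zero_iff {U : Set V} {d : V → V → ℝ} :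
    (∀ (m : ℕ) (x : Fin (m + 1) → V), (∀ i, x i ∈ U) →
      cycLen d m x = cycLen (fun p q => max (d p q) 0) m x) ↔
      ∀ p ∈ U, ∀ q ∈ U, 0 ≤ d p q := by
  refine ⟨fun h p hp q hq => ?_, fun h m x => cycLen_congr fun p hp q hq => ?_⟩
  · have hpq := h 1 ![p, q] (Fin.forall_fin_two.mpr ⟨hp, hq⟩)
    have hterms := (Finset.sum_eq_sum_iff_of_le fun _ _ => le_max_left _ _).mp hpq 0
      (Finset.mem_univ _)
    simpa using hterms
  · exact (max_eq_left (h p hp q hq)).symm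

end Cycles

section Retraction

variable {S : Type*} {μ : S → S → ℝ} {p q p' q' : Pt S}

theorem fst_eq_sub_of_sub_eq_smul_eVec {α : ℝ} (h : p - p' = α • eVec S) :
    p'.1 = fun s => p.1 s - α := by
  funext s
  have hs := congrFun (congrArg Prod.fst h) s
  simp only [Prod.fst_sub, Pi.sub_apply, Prod.smul_fst, eVec, Pi.smul_apply, smul_eq_mul,
    mul_one] at hs
  linarith

variable [Fintype S] [Nonempty S]

theorem Dinf_eq_max_supGap_of_mem_QQ (hp : p ∈ QQ μ) (hq : q ∈ QQ μ) :
    Dinf p q = max (supGap p.1 q.1) 0 := by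
  rw [Dinf, Dplus_eq_max_supGap, Dplus_eq_max_supGap, supGap_snd_eq_supGap_fst hp hq, max_self]

theorem Dinf_eq_supGap_add_of_balancedSet {R : Set (Pt S)} (hR : R ⊆ QQ μ)
    (hRb : BalancedSet R) (hp' : p' ∈ R) (hq' : q' ∈ R) {α β : ℝ}
    (hp : p - p' = α • eVec S) (hq : q - q' = β • eVec S) :
    Dinf p' q' = supGap p.1 q.1 + (α - β) := by
  have hgap : supGap p'.1 q'.1 = supGap p.1 q.1 + (α - β) := by
    rw [fst_eq_sub_of_sub_eq_smul_eVec hp, fst_eq_sub_of_sub_eq_smul_eVec hq, supGap_sub_const]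
  have hnonneg := (balancedSet_iff_supGap_nonneg hR).mp hRb p' hp' q' hq'
  rw [Dinf_eq_max_supGap_of_mem_QQ (hR hp') (hR hq'), max_eq_left hnonneg, hgap]

theorem cycLen_Dinf_comp_eq_cycLen_supGap {R : Set (Pt S)} (hR : R ⊆ QQ μ)
    (hRb : BalancedSet R) {φ : Pt S → Pt S}
    (hφ : ∀ q ∈ QQ μ, φ q ∈ R ∧ ∃ α : ℝ, q - φ q = α • eVec S)
    {m : ℕ} {x : Fin (m + 1) → Pt S} (hx : ∀ i, x i ∈ QQ μ) :
    cycLen Dinf m (fun i => φ (x i)) = cycLen (fun p q => supGap p.1 q.1) m x := by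
  choose! α hα using fun q hq => (hφ q hq).2
  rw [← cycLen_add_sub (fun p q : Pt S => supGap p.1 q.1) α]
  exact cycLen_congr (fun p hp q hq => Dinf_eq_supGap_add_of_balancedSet hR hRb
    (hφ p hp).1 (hφ q hq).1 (hα p hp) (hα q hq)) hx

end Retraction

theorem stmt5_general {S : Type*} [Fintype S] [Nonempty S] (μ : S → S → ℝ)
    (R : Set (Pt S)) (hR : IsSection μ R) (hRb : BalancedSet R)
    (φ : Pt S → Pt S)
    (hφ : ∀ q ∈ QQ μ, φ q ∈ R ∧ ∃ α : ℝ, q - φ q = α • eVec S) :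
    (∀ (m : ℕ) (x : Fin (m + 1) → Pt S), (∀ i, x i ∈ QQ μ) →
      cycLen Dinf m (fun i => φ (x i)) ≤ cycLen Dinf m x) ∧
    (∀ U ⊆ QQ μ, (BalancedSet U ↔
      ∀ (m : ℕ) (x : Fin (m + 1) → Pt S), (∀ i, x i ∈ U) →
        cycLen Dinf m (fun i => φ (x i)) = cycLen Dinf m x)) := by
  have hDinf : ∀ {m : ℕ} {x : Fin (m + 1) → Pt S}, (∀ i, x i ∈ QQ μ) →
      cycLen Dinf m x = cycLen (fun p q => max (supGap p.1 q.1) 0) m x :=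
    cycLen_congr fun _ hp _ hq => Dinf_eq_max_supGap_of_mem_QQ hp hq
  have hφlen : ∀ {m : ℕ} {x : Fin (m + 1) → Pt S}, (∀ i, x i ∈ QQ μ) →
      cycLen Dinf m (fun i => φ (x i)) = cycLen (fun p q => supGap p.1 q.1) m x :=
    cycLen_Dinf_comp_eq_cycLen_supGap hR.1 hRb hφ
  refine ⟨fun m x hx => ?_, fun U hU => ?_⟩
  · rw [hφlen hx, hDinf hx]
    exact cycLen_le_cycLen_max_zero _
  · rw [balancedSet_iff_supGap_nonneg hU, ← forall_cycLen_eq_max_zero_iff]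
    refine forall₂_congr fun m x => imp_congr_right fun hxU => ?_
    have hx : ∀ i, x i ∈ QQ μ := fun i => hU (hxU i)
    rw [hφlen hx, hDinf hx]

/-- Lemma 2.7.  Let `R ⊆ Q_μ` be a balanced section and `φ_R : Q_μ → R` the
retraction along `ℝe`.  Then (1) `φ_R` is cyclically nonexpansive, and
(2) `U ⊆ Q_μ` is balanced iff `φ_R` preserves the length of every cycle in `U`. -/
theorem stmt5 {S : Type*} [Fintype S] [Nonempty S] (μ : S → S → ℝ)
    (hμ : DirDist μ) (R : Set (Pt S)) (hR : IsSection μ R) (hRb : BalancedSet R)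
    (φ : Pt S → Pt S)
    (hφ : ∀ q ∈ QQ μ, φ q ∈ R ∧ ∃ α : ℝ, q - φ q = α • eVec S) :
    (∀ (m : ℕ) (x : Fin (m + 1) → Pt S), (∀ i, x i ∈ QQ μ) →
      cycLen Dinf m (fun i => φ (x i)) ≤ cycLen Dinf m x) ∧
    (∀ U ⊆ QQ μ, (BalancedSet U ↔
      ∀ (m : ℕ) (x : Fin (m + 1) → Pt S), (∀ i, x i ∈ U) →
        cycLen Dinf m (fun i => φ (x i)) = cycLen Dinf m x)) :=
  stmt5_general μ R hR hRb φ hφ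
end

section
/- Let μ be a directed distance on a nonempty finite set S. For each s ∈ S, T_{μ,s} = Q_{μ,s}^+, and for every balanced section R of Q_μ with R ⊆ Q_μ^+ we have R_s = T_{μ,s}, where for a set U ⊆ ℝ^{S^{cr}} we write U_s = { p ∈ U : p^c(s) = 0 and p^r(s) = 0 }. -/
open scoped BigOperators

/-- Proposition 2.11 (1).  For each `s`, `T_{μ,s} = Q_{μ,s}^+`, and `R_s = T_{μ,s}`
for every balanced section `R ⊆ Q_μ^+`, where `U_s = {p ∈ U : p^c(s) = p^r(s) = 0}`. -/
theorem stmt7 {S : Type*} [Fintype S] [Nonempty S] (μ : S → S → ℝ)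
    (hμ : DirDist μ) (s : S) :
    ({p ∈ TT μ | p.1 s = 0 ∧ p.2 s = 0} = {p ∈ QP μ | p.1 s = 0 ∧ p.2 s = 0}) ∧
    (∀ R : Set (Pt S), IsSection μ R → BalancedSet R → R ⊆ QP μ →
      {p ∈ R | p.1 s = 0 ∧ p.2 s = 0} = {p ∈ TT μ | p.1 s = 0 ∧ p.2 s = 0}) := by
  obtain ⟨hμ0, -⟩ := hμ
  have key : {p ∈ TT μ | p.1 s = 0 ∧ p.2 s = 0}
      = {p ∈ QP μ | p.1 s = 0 ∧ p.2 s = 0} := by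
    ext p
    simp only [Set.mem_setOf_eq, TT, QP, QQ, PP, PiP, Set.mem_sep_iff,
      Set.mem_inter_iff, Set.mem_setOf_eq]
    constructor
    · rintro ⟨⟨⟨hPi, hpos⟩, hmin⟩, hcs, hrs⟩
      refine ⟨⟨⟨hPi, ?_⟩, hpos⟩, hcs, hrs⟩
      intro q hqPi hqp
      have hq1 : q.1 ≤ p.1 := hqp.1
      have hq2 : q.2 ≤ p.2 := hqp.2
      have hqpos : (0 : Pt S) ≤ q := by
        constructor
        · intro t
          have h1 := hqPi t s
          have h2 := hq2 s
          have h3 := hμ0 t s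
          show (0 : ℝ) ≤ q.1 t
          linarith [hrs ▸ h2]
        · intro t
          have h1 := hqPi s t
          have h2 := hq1 s
          have h3 := hμ0 s t
          show (0 : ℝ) ≤ q.2 t
          linarith [hcs ▸ h2]
      exact hmin q ⟨hqPi, hqpos⟩ hqp
    · rintro ⟨⟨⟨hPi, hmin⟩, hpos⟩, hcs, hrs⟩
      exact ⟨⟨⟨hPi, hpos⟩, fun q hq hqp => hmin q hq.1 hqp⟩, hcs, hrs⟩
  refine ⟨key, ?_⟩
  intro R hsec _ hRQP
  rw [key]
  ext p
  simp only [Set.mem_setOf_eq]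
  constructor
  · rintro ⟨hpR, hcs, hrs⟩
    exact ⟨hRQP hpR, hcs, hrs⟩
  · rintro ⟨hpQP, hcs, hrs⟩
    obtain ⟨r, ⟨hrR, α, hα⟩, -⟩ := hsec.2 p hpQP.1
    have hrpos := (hRQP hrR).2
    have h1 : p.1 s - r.1 s = α := by
      have := congrFun (congrArg Prod.fst hα) s
      simpa [eVec] using this
    have h2 : p.2 s - r.2 s = -α := by
      have := congrFun (congrArg Prod.snd hα) s
      simpa [eVec] using this
    have hr1 : (0 : ℝ) ≤ r.1 s := hrpos.1 s
    have hr2 : (0 : ℝ) ≤ r.2 s := hrpos.2 s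
    have hα0 : α = 0 := by
      rw [hcs] at h1; rw [hrs] at h2; linarith
    have hpr : p = r := by
      have hz : p - r = 0 := by rw [hα, hα0]; simp
      exact sub_eq_zero.mp hz
    rw [hpr] at hcs hrs ⊢
    exact ⟨hrR, hcs, hrs⟩
end

section
/- Let μ be a directed distance on a nonempty finite set S. Then for all s,t ∈ S: μ(s,t) = D_∞(T_{μ,s}, T_{μ,t}) = D_∞(μ_s^{out}, μ_t^{in}). -/
open scoped BigOperators

/-- The "entrance" point `μ_s^{in}`. -/
noncomputable def muIn {S : Type*} [Fintype S] (μ : S → S → ℝ) (s : S) : Pt S :=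
  (fun t => μ t s, fun t => ⨆ u, (μ u t - μ u s))

/-- The "exit" point `μ_s^{out}`. -/
noncomputable def muOut {S : Type*} [Fintype S] (μ : S → S → ℝ) (s : S) : Pt S :=
  (fun t => ⨆ u, (μ t u - μ s u), fun t => μ s t)

/-- Minimum `D_∞`-distance from `A` to `B`. -/
noncomputable def DinfSet {S : Type*} [Fintype S] (A B : Set (Pt S)) : ℝ :=
  sInf (Set.image2 Dinf A B)

/-- `T_{μ,s}`. -/
def Tms {S : Type*} (μ : S → S → ℝ) (s : S) : Set (Pt S) :=
  {p ∈ TT μ | p.1 s = 0 ∧ p.2 s = 0}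

section Aux
variable {S : Type*} [Fintype S] [Nonempty S]

lemma le_sup' (f : S → ℝ) (x : S) : f x ≤ ⨆ y, f y :=
  le_ciSup (Set.Finite.bddAbove (Set.finite_range f)) x

lemma muOut_mem (μ : S → S → ℝ) (hμ : DirDist μ) (s : S) : muOut μ s ∈ Tms μ s := by
  obtain ⟨h0, hd⟩ := hμ
  have hsup0 : (⨆ v, (μ s v - μ s v)) = 0 := by simp
  refine ⟨⟨⟨?_, ?_, ?_⟩, ?_⟩, ?_, ?_⟩
  · intro u w
    have := le_sup' (fun v => μ u v - μ s v) w
    simpa [muOut] using by linarith [this]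
  · intro u
    have := le_sup' (fun v => μ u v - μ s v) s
    simp only [hd] at this
    simpa [muOut] using le_trans (h0 u s) (by linarith [this])
  · intro u
    simpa [muOut] using h0 s u
  · rintro q ⟨hqPi, hq01, hq02⟩ ⟨hq1, hq2⟩
    have hq1s : q.1 s = 0 := le_antisymm (by simpa [muOut, hsup0] using hq1 s) (hq01 s)
    have hq2eq : ∀ u, q.2 u = μ s u := by
      intro u
      refine le_antisymm (by simpa [muOut] using hq2 u) ?_
      have := hqPi s u
      linarith [hq1s ▸ this]
    have hq1eq : ∀ u, q.1 u = ⨆ v, (μ u v - μ s v) := by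
      intro u
      refine le_antisymm (by simpa [muOut] using hq1 u) (ciSup_le fun v => ?_)
      have := hqPi u v
      rw [hq2eq v] at this
      linarith
    exact Prod.ext (funext hq1eq) (funext hq2eq)
  · simpa [muOut] using hsup0
  · simpa [muOut] using hd s

lemma muIn_mem (μ : S → S → ℝ) (hμ : DirDist μ) (t : S) : muIn μ t ∈ Tms μ t := by
  obtain ⟨h0, hd⟩ := hμ
  have hsup0 : (⨆ v, (μ v t - μ v t)) = 0 := by simp
  refine ⟨⟨⟨?_, ?_, ?_⟩, ?_⟩, ?_, ?_⟩
  · intro u w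
    have := le_sup' (fun v => μ v w - μ v t) u
    simpa [muIn] using by linarith [this]
  · intro u
    simpa [muIn] using h0 u t
  · intro u
    have := le_sup' (fun v => μ v u - μ v t) t
    simp only [hd] at this
    simpa [muIn] using le_trans (h0 t u) (by linarith [this])
  · rintro q ⟨hqPi, hq01, hq02⟩ ⟨hq1, hq2⟩
    have hq2t : q.2 t = 0 := le_antisymm (by simpa [muIn, hsup0] using hq2 t) (hq02 t)
    have hq1eq : ∀ u, q.1 u = μ u t := by
      intro u
      refine le_antisymm (by simpa [muIn] using hq1 u) ?_
      have := hqPi u t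
      linarith [hq2t ▸ this]
    have hq2eq : ∀ u, q.2 u = ⨆ v, (μ v u - μ v t) := by
      intro u
      refine le_antisymm (by simpa [muIn] using hq2 u) (ciSup_le fun v => ?_)
      have := hqPi v u
      rw [hq1eq v] at this
      linarith
    exact Prod.ext (funext hq1eq) (funext hq2eq)
  · simpa [muIn] using hd t
  · simpa [muIn] using hsup0

lemma dinf_muOut_muIn (μ : S → S → ℝ) (hμ : DirDist μ) (s t : S) :
    Dinf (muOut μ s) (muIn μ t) = μ s t := by
  obtain ⟨h0, hd⟩ := hμ
  have hA : Dplus (muOut μ s).1 (muIn μ t).1 = μ s t := by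
    refine le_antisymm (ciSup_le fun u => max_le ?_ (h0 s t)) ?_
    · have := le_sup' (fun v => μ u v - μ s v) t
      simp only [muOut, muIn]
      linarith
    · have h := le_sup' (fun u => max ((muIn μ t).1 u - (muOut μ s).1 u) 0) s
      have hs : (muOut μ s).1 s = 0 := by simp [muOut]
      rw [hs] at h
      simpa [Dplus, muIn, max_eq_left (h0 s t)] using h
  have hB : Dplus (muIn μ t).2 (muOut μ s).2 = μ s t := by
    refine le_antisymm (ciSup_le fun u => max_le ?_ (h0 s t)) ?_
    · have := le_sup' (fun v => μ v u - μ v t) s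
      simp only [muOut, muIn]
      linarith
    · have h := le_sup' (fun u => max ((muOut μ s).2 u - (muIn μ t).2 u) 0) t
      have ht : (muIn μ t).2 t = 0 := by simp [muIn]
      rw [ht] at h
      simpa [Dplus, muOut, max_eq_left (h0 s t)] using h
  simp [Dinf, hA, hB]

lemma dinf_lower (μ : S → S → ℝ) (hμ : DirDist μ) {s t : S} {p q : Pt S}
    (hp : p ∈ Tms μ s) (hq : q ∈ Tms μ t) : μ s t ≤ Dinf p q := by
  obtain ⟨⟨⟨hqPi, _⟩, _⟩, hq1t, hq2t⟩ := hq
  obtain ⟨_, hp1s, _⟩ := hp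
  have h1 : μ s t ≤ q.1 s := by have := hqPi s t; linarith [hq2t ▸ this]
  have h2 : q.1 s - p.1 s ≤ max (q.1 s - p.1 s) 0 := le_max_left _ _
  have h3 : max (q.1 s - p.1 s) 0 ≤ Dplus p.1 q.1 :=
    le_sup' (fun x => max (q.1 x - p.1 x) 0) s
  calc μ s t ≤ q.1 s - p.1 s := by rw [hp1s]; linarith
    _ ≤ Dplus p.1 q.1 := le_trans h2 h3
    _ ≤ Dinf p q := le_max_left _ _

end Aux

/-- Proposition 2.11 (3).  `μ(s,t) = D_∞(T_{μ,s}, T_{μ,t}) = D_∞(μ_s^{out}, μ_t^{in})`. -/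
theorem stmt9 {S : Type*} [Fintype S] [Nonempty S] (μ : S → S → ℝ)
    (hμ : DirDist μ) :
    ∀ s t : S, μ s t = DinfSet (Tms μ s) (Tms μ t) ∧
      μ s t = Dinf (muOut μ s) (muIn μ t) := by
  intro s t
  have hmem : μ s t ∈ Set.image2 Dinf (Tms μ s) (Tms μ t) :=
    ⟨muOut μ s, muOut_mem μ hμ s, muIn μ t, muIn_mem μ hμ t, dinf_muOut_muIn μ hμ s t⟩
  have hbdd : ∀ x ∈ Set.image2 Dinf (Tms μ s) (Tms μ t), μ s t ≤ x := by
    rintro x ⟨p, hp, q, hq, rfl⟩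
    exact dinf_lower μ hμ hp hq
  refine ⟨le_antisymm (le_csInf ⟨_, hmem⟩ hbdd) (csInf_le ⟨μ s t, hbdd⟩ hmem),
    (dinf_muOut_muIn μ hμ s t).symm⟩
end

section
/- Let μ be a directed metric on a nonempty finite set S (a directed distance additionally satisfying μ(s,t) + μ(t,u) ≥ μ(s,u) for all s,t,u ∈ S). Then for each s ∈ S, T_{μ,s} = { μ_s }, i.e., the unique point p ∈ T_μ with p^c(s) = p^r(s) = 0 is the point μ_s. -/
open scoped BigOperators

/-- The canonical point `μ_s` of `ℝ^{S^{cr}}`. -/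
def muVec {S : Type*} (μ : S → S → ℝ) (s : S) : Pt S :=
  (fun t => μ t s, fun t => μ s t)

/-- Proposition 2.11 (4).  If `μ` is a directed metric, then `T_{μ,s} = {μ_s}`. -/
theorem stmt10 {S : Type*} [Fintype S] [Nonempty S] (μ : S → S → ℝ)
    (hμ : DirMetric μ) :
    ∀ s : S, Tms μ s = {muVec μ s} := by
  obtain ⟨⟨hnn, hdiag⟩, htri⟩ := hμ
  intro s
  have hmuPP : muVec μ s ∈ PP μ := by
    refine ⟨fun t u => ?_, ?_⟩
    · exact htri t s u
    · exact ⟨fun t => hnn t s, fun t => hnn s t⟩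
  have hmin : ∀ q ∈ PP μ, q ≤ muVec μ s → q = muVec μ s := by
    rintro q ⟨hq, hq0⟩ hle
    have h2s : q.2 s = 0 := le_antisymm (by simpa [muVec, hdiag] using hle.2 s) (hq0.2 s)
    have h1s : q.1 s = 0 := le_antisymm (by simpa [muVec, hdiag] using hle.1 s) (hq0.1 s)
    have h1 : q.1 = (muVec μ s).1 := by
      funext t
      refine le_antisymm (hle.1 t) ?_
      have := hq t s
      simpa [muVec, h2s] using this
    have h2 : q.2 = (muVec μ s).2 := by
      funext t
      refine le_antisymm (hle.2 t) ?_
      have := hq s t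
      simpa [muVec, h1s] using this
    exact Prod.ext h1 h2
  ext p
  simp only [Tms, Set.mem_setOf_eq, Set.mem_singleton_iff]
  constructor
  · rintro ⟨⟨hpPP, hpmin⟩, h1s, h2s⟩
    have hle : muVec μ s ≤ p := by
      constructor
      · intro t
        have := hpPP.1 t s
        simpa [muVec, h2s] using this
      · intro t
        have := hpPP.1 s t
        simpa [muVec, h1s] using this
    exact (hpmin (muVec μ s) hmuPP hle).symm
  · rintro rfl
    exact ⟨⟨hmuPP, hmin⟩, hdiag s, hdiag s⟩
end
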